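/- Let μ > 0 and λ + 2μ > μ. Then ∑_{n=1}^{⌊Λ/(λ+2μ)⌋} r₂(n) = (π/(λ+2μ))·Λ + o(Λ) as Λ → +∞; hence the difference of the 3D cylinder counting functions satisfies N_FD(Λ) − N_DF(Λ) = (π/(λ+2μ))·Λ + o(Λ) as Λ → +∞. -/

import Mathlib

open Filter Finset

/-- `r₂(n)` is the number of representations of `n` as an ordered sum of two squares
of integers. -/
noncomputable def r2 (n : ℕ) : ℕ :=
  ((Finset.Icc (-(n : ℤ)) (n : ℤ) ×ˢ Finset.Icc (-(n : ℤ)) (n : ℤ)).filter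
    (fun p => p.1 ^ 2 + p.2 ^ 2 = (n : ℤ))).card

/-- The eigenvalue counting function of the Dirichlet-free problem on the 3D flat
cylinder of height `h`. -/
noncomputable def NDF3 (lam mu h Λ : ℝ) : ℝ :=
  (⌊h / Real.pi * Real.sqrt (Λ / (lam + 2 * mu))⌋ : ℝ)
  + ∑ n ∈ Finset.Icc 1 ⌊Λ / mu⌋₊,
      (r2 n : ℝ) * (2 * (⌊h / Real.pi * Real.sqrt (Λ / mu - (n : ℝ))⌋ : ℝ) + 1)
  + ∑ n ∈ Finset.Icc 1 ⌊Λ / (lam + 2 * mu)⌋₊,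
      (r2 n : ℝ) * (⌊h / Real.pi * Real.sqrt (Λ / (lam + 2 * mu) - (n : ℝ))⌋ : ℝ)

/-- The eigenvalue counting function of the free-Dirichlet problem on the 3D flat
cylinder of height `h`. -/
noncomputable def NFD3 (lam mu h Λ : ℝ) : ℝ :=
  NDF3 lam mu h Λ + ∑ n ∈ Finset.Icc 1 ⌊Λ / (lam + 2 * mu)⌋₊, (r2 n : ℝ)

/-!
`1 + ∑_{n=1}^{N} r₂(n)` is the number of points of `ℤ²` in the closed disk of radius `√N`.
Since `ℤ²` has covolume `1` and the unit disk has area `π`, the lattice point counting theorem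
`ZLattice.covolume.tendsto_card_le_div` gives that this number is `π N + o(N)`. The difference
`N_FD − N_DF` is that sum at `N = ⌊Λ/(λ+2μ)⌋`, so it is `π Λ/(λ+2μ) + o(Λ)`.
-/

open Topology MeasureTheory Module Metric

abbrev stdLattice (ι : Type*) [Fintype ι] : Submodule ℤ (ι → ℝ) :=
  Submodule.span ℤ (Set.range (Pi.basisFun ℝ ι))

section

variable {ι : Type*} [Fintype ι]

theorem mem_stdLattice_iff (x : ι → ℝ) : x ∈ stdLattice ι ↔ ∀ i, ∃ n : ℤ, (n : ℝ) = x i := by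
  simp [Basis.mem_span_iff_repr_mem]

variable (ι) in
theorem covolume_stdLattice : ZLattice.covolume (stdLattice ι) = 1 := by
  classical
  rw [ZLattice.covolume_eq_det _ ((Pi.basisFun ℝ ι).restrictScalars ℤ)]
  have : Matrix.of ((↑) ∘ (Pi.basisFun ℝ ι).restrictScalars ℤ) = (1 : Matrix ι ι ℝ) := by
    ext i j
    simp [Matrix.one_apply, Pi.single_apply, eq_comm]
  simp [this]

theorem setOf_sum_sq_le_one_eq_preimage_closedBall :
    {x : ι → ℝ | ∑ i, x i ^ 2 ≤ 1} = WithLp.toLp 2 ⁻¹' closedBall 0 1 := by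
  ext x
  simp [EuclideanSpace.norm_eq, Real.sqrt_le_one]

theorem convex_setOf_sum_sq_le_one : Convex ℝ {x : ι → ℝ | ∑ i, x i ^ 2 ≤ 1} := by
  rw [setOf_sum_sq_le_one_eq_preimage_closedBall]
  exact (convex_closedBall 0 1).linear_preimage
    (WithLp.linearEquiv 2 ℝ (ι → ℝ)).symm.toLinearMap

theorem isBounded_setOf_sum_sq_le_one :
    Bornology.IsBounded {x : ι → ℝ | ∑ i, x i ^ 2 ≤ 1} := by
  refine (isBounded_closedBall (x := 0) (r := 1)).subset fun x hx => ?_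
  rw [mem_closedBall_zero_iff, pi_norm_le_iff_of_nonneg zero_le_one]
  intro i
  rw [Real.norm_eq_abs, ← sq_le_one_iff_abs_le_one]
  exact (single_le_sum (fun j _ => sq_nonneg (x j)) (mem_univ i)).trans hx

end

theorem volume_setOf_sum_sq_le_one :
    volume {x : Fin 2 → ℝ | ∑ i, x i ^ 2 ≤ 1} = ENNReal.ofReal Real.pi := by
  rw [setOf_sum_sq_le_one_eq_preimage_closedBall,
    (PiLp.volume_preserving_toLp (Fin 2)).measure_preimage measurableSet_closedBall.nullMeasurableSet]
  simp

theorem tendsto_natCard_setOf_sum_sq_le_inter_stdLattice_div :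
    Tendsto (fun c : ℝ => (Nat.card ({x : Fin 2 → ℝ | ∑ i, x i ^ 2 ≤ c} ∩ stdLattice (Fin 2) :
      Set (Fin 2 → ℝ)) : ℝ) / c) atTop (𝓝 Real.pi) := by
  have key := ZLattice.covolume.tendsto_card_le_div (stdLattice (Fin 2)) (X := Set.univ)
    (F := fun x => ∑ i, x i ^ 2) (fun _ _ _ _ => trivial)
    (fun x r _ => by simp only [Pi.smul_apply, smul_eq_mul, mul_pow, ← mul_sum]; simp)
    (by simpa using isBounded_setOf_sum_sq_le_one (ι := Fin 2))
    (by simpa using measurableSet_le (by fun_prop) measurable_const)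
    (by simpa using (convex_setOf_sum_sq_le_one (ι := Fin 2)).addHaar_frontier volume)
  simp only [Set.mem_univ, true_and] at key
  rwa [covolume_stdLattice, div_one, measureReal_def, volume_setOf_sum_sq_le_one,
    ENNReal.toReal_ofReal Real.pi_pos.le] at key

theorem mem_Icc_prod_Icc_of_sq_add_sq_le {p : ℤ × ℤ} {n : ℤ} (h : p.1 ^ 2 + p.2 ^ 2 ≤ n) :
    p ∈ Icc (-n) n ×ˢ Icc (-n) n := by
  have hIcc {a : ℤ} (ha : a ^ 2 ≤ n) : a ∈ Icc (-n) n :=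
    mem_Icc.mpr (abs_le.mp (by rw [Int.abs_eq_natAbs]; exact (Int.natAbs_le_self_sq a).trans ha))
  exact mem_product.mpr ⟨hIcc (by linarith [sq_nonneg p.2]), hIcc (by linarith [sq_nonneg p.1])⟩

noncomputable def diskPoints (N : ℕ) : Finset (ℤ × ℤ) :=
  {p ∈ Icc (-(N : ℤ)) N ×ˢ Icc (-(N : ℤ)) N | p.1 ^ 2 + p.2 ^ 2 ≤ N}

theorem mem_diskPoints {N : ℕ} {p : ℤ × ℤ} : p ∈ diskPoints N ↔ p.1 ^ 2 + p.2 ^ 2 ≤ N := by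
  rw [diskPoints, mem_filter]
  exact and_iff_right_of_imp mem_Icc_prod_Icc_of_sq_add_sq_le

theorem r2_eq_card_filter_diskPoints {n N : ℕ} (hn : n ≤ N) :
    r2 n = #{p ∈ diskPoints N | (p.1 ^ 2 + p.2 ^ 2).toNat = n} := by
  rw [r2]
  congr 1
  ext p
  have hq : 0 ≤ p.1 ^ 2 + p.2 ^ 2 := by positivity
  rw [mem_filter, mem_filter, mem_diskPoints,
    and_iff_right_of_imp fun h => mem_Icc_prod_Icc_of_sq_add_sq_le h.le]
  omega

theorem r2_zero : r2 0 = 1 := by decide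

theorem card_diskPoints (N : ℕ) : #(diskPoints N) = 1 + ∑ n ∈ Icc 1 N, r2 n := by
  have hmaps : ∀ p ∈ diskPoints N, (p.1 ^ 2 + p.2 ^ 2).toNat ∈ Icc 0 N := fun p hp =>
    mem_Icc.mpr ⟨Nat.zero_le _, Int.toNat_le.mpr (mem_diskPoints.mp hp)⟩
  rw [card_eq_sum_card_fiberwise hmaps, ← insert_Icc_add_one_left_eq_Icc (Nat.zero_le N),
    sum_insert (by simp), ← r2_zero]
  congr 1
  · rw [r2_eq_card_filter_diskPoints (Nat.zero_le N)]
  · exact sum_congr rfl fun n hn => (r2_eq_card_filter_diskPoints (mem_Icc.mp hn).2).symm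

theorem intCast_sq_add_sq_le_iff {a b : ℤ} {c : ℝ} (hc : 0 ≤ c) :
    (a : ℝ) ^ 2 + (b : ℝ) ^ 2 ≤ c ↔ a ^ 2 + b ^ 2 ≤ (⌊c⌋₊ : ℤ) := by
  rw [Int.natCast_floor_eq_floor hc, Int.le_floor]
  norm_cast

theorem natCard_setOf_sum_sq_le_inter_stdLattice {c : ℝ} (hc : 0 ≤ c) :
    Nat.card ({x : Fin 2 → ℝ | ∑ i, x i ^ 2 ≤ c} ∩ stdLattice (Fin 2) : Set (Fin 2 → ℝ)) =
      #(diskPoints ⌊c⌋₊) := by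
  let f : ℤ × ℤ → Fin 2 → ℝ := fun p => ![(p.1 : ℝ), p.2]
  have hf : Function.Injective f := fun p q h =>
    Prod.ext (by simpa [f] using congrFun h 0) (by simpa [f] using congrFun h 1)
  have hset : ({x : Fin 2 → ℝ | ∑ i, x i ^ 2 ≤ c} ∩ stdLattice (Fin 2) : Set (Fin 2 → ℝ)) =
      ((diskPoints ⌊c⌋₊).image f : Set (Fin 2 → ℝ)) := by
    ext x
    simp only [Set.mem_inter_iff, Set.mem_ofPred_eq, SetLike.mem_coe, mem_stdLattice_iff,
      coe_image, Set.mem_image, mem_diskPoints, ← intCast_sq_add_sq_le_iff hc,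
      Fin.sum_univ_two]
    constructor
    · rintro ⟨hx, h⟩
      obtain ⟨a, ha⟩ := h 0
      obtain ⟨b, hb⟩ := h 1
      exact ⟨(a, b), by simpa [ha, hb] using hx,
        funext fun i => by fin_cases i <;> simp [f, ha, hb]⟩
    · rintro ⟨p, hp, rfl⟩
      refine ⟨by simpa [f] using hp, fun i => ?_⟩
      fin_cases i
      exacts [⟨p.1, rfl⟩, ⟨p.2, rfl⟩]
  rw [hset, Nat.card_coe_set_eq, Set.ncard_coe_finset, card_image_of_injective _ hf]

theorem tendsto_sum_r2_div :
    Tendsto (fun x : ℝ => (∑ n ∈ Icc 1 ⌊x⌋₊, (r2 n : ℝ)) / x) atTop (𝓝 Real.pi) := by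
  have h := tendsto_natCard_setOf_sum_sq_le_inter_stdLattice_div.sub tendsto_inv_atTop_zero
  rw [sub_zero] at h
  refine h.congr' ?_
  filter_upwards [eventually_gt_atTop 0] with x hx
  rw [natCard_setOf_sum_sq_le_inter_stdLattice hx.le, card_diskPoints]
  push_cast
  field_simp
  ring

theorem tendsto_sum_r2_floor_div_sub {c : ℝ} (hc : 0 < c) :
    Tendsto (fun Λ : ℝ => ((∑ n ∈ Icc 1 ⌊Λ / c⌋₊, (r2 n : ℝ)) - Real.pi / c * Λ) / Λ)
      atTop (𝓝 0) := by
  have h := ((tendsto_sum_r2_div.comp (tendsto_id.atTop_div_const hc)).sub_const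
    Real.pi).div_const c
  rw [sub_self, zero_div] at h
  refine h.congr' ?_
  filter_upwards [eventually_gt_atTop 0] with Λ hΛ
  simp only [Function.comp_apply, id]
  field_simp

theorem NFD3_sub_NDF3_general (lam mu h : ℝ) (hmu : 0 < mu) (hlt : mu < lam + 2 * mu) :
    Tendsto (fun Λ : ℝ =>
      ((∑ n ∈ Finset.Icc 1 ⌊Λ / (lam + 2 * mu)⌋₊, (r2 n : ℝ))
        - Real.pi / (lam + 2 * mu) * Λ) / Λ) atTop (nhds 0) ∧
    Tendsto (fun Λ : ℝ =>
      (NFD3 lam mu h Λ - NDF3 lam mu h Λ - Real.pi / (lam + 2 * mu) * Λ) / Λ)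
      atTop (nhds 0) := by
  have hsum := tendsto_sum_r2_floor_div_sub (hmu.trans hlt)
  refine ⟨hsum, hsum.congr fun Λ => ?_⟩
  rw [NFD3, add_sub_cancel_left]

/-- `∑_{n=1}^{⌊Λ/(λ+2μ)⌋} r₂(n) = (π/(λ+2μ))Λ + o(Λ)`, whence the difference of the
3D cylinder counting functions satisfies `N_FD(Λ) − N_DF(Λ) = (π/(λ+2μ))Λ + o(Λ)`. -/
theorem NFD3_sub_NDF3 (lam mu h : ℝ) (hmu : 0 < mu) (hlt : mu < lam + 2 * mu)
    (hh : 0 < h) :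
    Tendsto (fun Λ : ℝ =>
      ((∑ n ∈ Finset.Icc 1 ⌊Λ / (lam + 2 * mu)⌋₊, (r2 n : ℝ))
        - Real.pi / (lam + 2 * mu) * Λ) / Λ) atTop (nhds 0) ∧
    Tendsto (fun Λ : ℝ =>
      (NFD3 lam mu h Λ - NDF3 lam mu h Λ - Real.pi / (lam + 2 * mu) * Λ) / Λ)
      atTop (nhds 0) :=
  NFD3_sub_NDF3_general lam mu h hmu hlt
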